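/- arXiv:1801.10112 — 3 statements merged into one kernel-verified Lean document; each statement's English description precedes it below -/
import Mathlib

section
/- Let α be a finite nonempty type and E = EuclideanSpace ℝ (Fin P). Let p : E → α → ℝ and θ₀ ∈ E be such that on a neighborhood U of θ₀ we have p θ y > 0 for all y and ∑_{y∈α} p θ y = 1, and for each y the map θ ↦ p θ y is twice continuously differentiable on U. Let L_y = fderiv ℝ (fun θ => Real.log (p θ y)) θ₀ and define the Fisher quadratic form Q(Δ) = ∑_{y} p θ₀ y * (L_y Δ)^2 and the KL divergence D(Δ) = ∑_{y} p θ₀ y * Real.log (p θ₀ y / p (θ₀ + Δ) y). Then D(Δ) − (1/2) Q(Δ) = o(‖Δ‖²) as Δ → 0; that is, the second-order Taylor approximation of D_KL(p_{θ₀} ‖ p_{θ₀+Δθ}) is (1/2) Δθᵀ F_{θ₀} Δθ where F_{θ₀} is the Fisher information matrix. -/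
/-!
Up to sign, the KL divergence is the increment of the cross-entropy
`θ ↦ ∑ y, p θ₀ y * log (p θ y)` between `θ₀` and `θ₀ + Δ`. Since `∑ y, p θ y = 1` near `θ₀`, the
first and second derivatives of the `p · y` sum to zero, so the gradient of the cross-entropy at
`θ₀` is `∑ y, ∇p_y = 0` and its Hessian is `∑ y, ∇²p_y - ∑ y, p θ₀ y • L_y ⊗ L_y = -F`.
The second-order Taylor expansion with Peano remainder then gives the claim.
-/

open Asymptotics Filter Metric
open scoped Topology

section

variable {E F : Type*} [NormedAddCommGroup E] [NormedSpace ℝ E]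
  [NormedAddCommGroup F] [NormedSpace ℝ F]

theorem hasFDerivAt_apply_self_of_symm {B : E →L[ℝ] E →L[ℝ] F} (hB : ∀ v w, B v w = B w v)
    (v : E) : HasFDerivAt (fun v => B v v) ((2 : ℝ) • B v) v :=
  (B.hasFDerivAt_of_bilinear (hasFDerivAt_id v) (hasFDerivAt_id v)).congr_fderiv <| by
    ext w
    simp [hB w v, two_smul]

theorem isLittleO_taylor_two {g : E → F} {G : E → E →L[ℝ] F} {B : E →L[ℝ] E →L[ℝ] F} {x : E}
    (hg : ∀ᶠ y in 𝓝 x, HasFDerivAt g (G y) y) (hG : HasFDerivAt G B x) :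
    (fun Δ => g (x + Δ) - g x - G x Δ - (1 / 2 : ℝ) • B Δ Δ) =o[𝓝 0] fun Δ => ‖Δ‖ ^ 2 := by
  obtain ⟨r, hr, hball⟩ := eventually_nhds_iff_ball.1 hg
  have hsymm := second_derivative_symmetric_of_eventually hg hG
  -- By symmetry of `B`, the remainder `φ` has derivative `G y - G x - B (y - x) = o(‖y - x‖)`,
  -- which the mean value inequality integrates to `o(‖y - x‖ ^ 2)`.
  set φ : E → F := fun y => g y - G x (y - x) - (1 / 2 : ℝ) • B (y - x) (y - x)
  have hφ : ∀ y ∈ ball x r, HasFDerivAt φ (G y - G x - B (y - x)) y := by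
    intro y hy
    have hquad := (hasFDerivAt_apply_self_of_symm hsymm (y - x)).comp y
      ((hasFDerivAt_id y).sub_const x)
    refine (((hball y hy).sub ((G x).hasFDerivAt.comp y ((hasFDerivAt_id y).sub_const x))).sub
      (hquad.const_smul (1 / 2 : ℝ))).congr_fderiv ?_
    ext w
    simp [smul_smul]
  have hnhds : 𝓝[ball x r] x = 𝓝 x := isOpen_ball.nhdsWithin_eq (mem_ball_self hr)
  have hφ' : (fun y => G y - G x - B (y - x)) =o[𝓝[ball x r] x] fun y => ‖y - x‖ ^ 1 := by
    simpa [hnhds] using hG.isLittleO.norm_right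
  have h := (convex_ball x r).isLittleO_pow_succ (mem_ball_self hr)
    (fun y hy => (hφ y hy).hasFDerivWithinAt) hφ'
  rw [hnhds] at h
  have hshift : Tendsto (fun Δ : E => x + Δ) (𝓝 0) (𝓝 x) := by
    simpa using (continuous_const_add x).tendsto (0 : E)
  refine (h.comp_tendsto hshift).congr' ?_ ?_ <;> filter_upwards with Δ
  · simp only [φ, Function.comp_apply, add_sub_cancel_left, sub_self, map_zero,
      smul_zero, sub_zero]
    abel
  · simp

theorem isLittleO_log_taylor_two {q : E → ℝ} {x : E} (hq : ContDiffAt ℝ 2 q x) (hx : q x ≠ 0) :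
    (fun Δ => Real.log (q (x + Δ)) - Real.log (q x) - (q x)⁻¹ * fderiv ℝ q x Δ -
        (1 / 2) * ((q x)⁻¹ * fderiv ℝ (fderiv ℝ q) x Δ Δ - ((q x)⁻¹ * fderiv ℝ q x Δ) ^ 2))
      =o[𝓝 0] fun Δ => ‖Δ‖ ^ 2 := by
  have hlog : ∀ᶠ y in 𝓝 x,
      HasFDerivAt (fun y => Real.log (q y)) ((q y)⁻¹ • fderiv ℝ q y) y := by
    filter_upwards [hq.eventually (by simp), hq.continuousAt.eventually_ne hx] with y hy hy0
    exact (hy.differentiableAt (by norm_num)).hasFDerivAt.log hy0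
  have hinv : HasFDerivAt (fun y => (q y)⁻¹) (-(q x ^ 2)⁻¹ • fderiv ℝ q x) x :=
    (hasDerivAt_inv hx).comp_hasFDerivAt x (hq.differentiableAt (by norm_num)).hasFDerivAt
  have hdq : HasFDerivAt (fderiv ℝ q) (fderiv ℝ (fderiv ℝ q) x) x :=
    ((hq.fderiv_right (m := 1) (by norm_num)).differentiableAt (by norm_num)).hasFDerivAt
  refine (isLittleO_taylor_two hlog (hinv.smul hdq)).congr' ?_ EventuallyEq.rfl
  filter_upwards with Δ
  simp only [add_apply, smul_apply, ContinuousLinearMap.smulRight_apply, smul_eq_mul]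
  ring

theorem sum_fderiv_eq_zero_of_eventually_sum_eq {ι : Type*} [Fintype ι] {f : ι → E → F}
    {x : E} {c : F} (hf : ∀ i, DifferentiableAt ℝ (f i) x)
    (hc : ∀ᶠ y in 𝓝 x, ∑ i, f i y = c) : ∑ i, fderiv ℝ (f i) x = 0 := by
  have hconst : (fun y => ∑ i, f i y) =ᶠ[𝓝 x] fun _ => c := hc
  rw [← fderiv_fun_sum fun i _ => hf i, hconst.fderiv_eq, fderiv_const_apply]

theorem sum_fderiv_fderiv_eq_zero_of_eventually_sum_eq {ι : Type*} [Fintype ι] {f : ι → E → F}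
    {x : E} {c : F} (hf : ∀ i, ContDiffAt ℝ 2 (f i) x)
    (hc : ∀ᶠ y in 𝓝 x, ∑ i, f i y = c) : ∑ i, fderiv ℝ (fderiv ℝ (f i)) x = 0 := by
  refine sum_fderiv_eq_zero_of_eventually_sum_eq (c := 0)
    (fun i => ((hf i).fderiv_right (m := 1) (by norm_num)).differentiableAt (by norm_num)) ?_
  filter_upwards [hc.eventually_nhds, eventually_all.2 fun i => (hf i).eventually (by simp)]
    with y hy hfy
  exact sum_fderiv_eq_zero_of_eventually_sum_eq (fun i => (hfy i).differentiableAt (by norm_num)) hy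

theorem isLittleO_sum_mul_log_sub_add_half_fisher {ι : Type*} [Fintype ι] {q : ι → E → ℝ}
    {x : E} {c : ℝ} (hq : ∀ i, ContDiffAt ℝ 2 (q i) x) (hx : ∀ i, q i x ≠ 0)
    (hsum : ∀ᶠ y in 𝓝 x, ∑ i, q i y = c) :
    (fun Δ => ∑ i, q i x * (Real.log (q i (x + Δ)) - Real.log (q i x)) +
        (1 / 2) * ∑ i, q i x * (fderiv ℝ (fun y => Real.log (q i y)) x Δ) ^ 2)
      =o[𝓝 0] fun Δ => ‖Δ‖ ^ 2 := by
  have hscore : ∀ i, fderiv ℝ (fun y => Real.log (q i y)) x = (q i x)⁻¹ • fderiv ℝ (q i) x :=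
    fun i => (((hq i).differentiableAt (by norm_num)).hasFDerivAt.log (hx i)).fderiv
  have h₁ :=
    sum_fderiv_eq_zero_of_eventually_sum_eq (fun i => (hq i).differentiableAt (by norm_num)) hsum
  have h₂ := sum_fderiv_fderiv_eq_zero_of_eventually_sum_eq hq hsum
  have htaylor := IsLittleO.fun_sum (s := Finset.univ) fun i _ =>
    (isLittleO_log_taylor_two (hq i) (hx i)).const_mul_left (q i x)
  refine htaylor.congr' (Eventually.of_forall fun Δ => ?_) EventuallyEq.rfl
  calc _ = ∑ i, (q i x * (Real.log (q i (x + Δ)) - Real.log (q i x)) +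
        (1 / 2) * (q i x * ((q i x)⁻¹ * fderiv ℝ (q i) x Δ) ^ 2) -
          (fderiv ℝ (q i) x Δ + (1 / 2) * fderiv ℝ (fderiv ℝ (q i)) x Δ Δ)) :=
        Finset.sum_congr rfl fun i _ => by have := hx i; field_simp; ring
    _ = _ := by
      have h₁Δ : ∑ i, fderiv ℝ (q i) x Δ = 0 := by simpa using DFunLike.congr_fun h₁ Δ
      have h₂Δ : ∑ i, fderiv ℝ (fderiv ℝ (q i)) x Δ Δ = 0 := by
        simpa using DFunLike.congr_fun (DFunLike.congr_fun h₂ Δ) Δ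
      simp only [hscore, smul_apply, smul_eq_mul, Finset.sum_add_distrib, Finset.sum_sub_distrib,
        ← Finset.mul_sum, h₁Δ, h₂Δ]
      ring

end

theorem kl_second_order_taylor_fisher_general
    {α : Type*} [Fintype α] {P : ℕ}
    (p : EuclideanSpace ℝ (Fin P) → α → ℝ) (θ₀ : EuclideanSpace ℝ (Fin P))
    (U : Set (EuclideanSpace ℝ (Fin P))) (hU : U ∈ nhds θ₀)
    (hpos : ∀ θ ∈ U, ∀ y, 0 < p θ y)
    (hsum : ∀ θ ∈ U, ∑ y, p θ y = 1)
    (hsmooth : ∀ y, ContDiffOn ℝ 2 (fun θ => p θ y) U) :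
    (fun Δ : EuclideanSpace ℝ (Fin P) =>
        (∑ y, p θ₀ y * Real.log (p θ₀ y / p (θ₀ + Δ) y)) -
          (1 / 2) * ∑ y, p θ₀ y *
            ((fderiv ℝ (fun θ => Real.log (p θ y)) θ₀) Δ) ^ 2)
      =o[nhds (0 : EuclideanSpace ℝ (Fin P))]
        (fun Δ : EuclideanSpace ℝ (Fin P) => ‖Δ‖ ^ 2) := by
  have hexpand := isLittleO_sum_mul_log_sub_add_half_fisher (q := fun y θ => p θ y)
    (fun y => (hsmooth y).contDiffAt hU) (fun y => (hpos θ₀ (mem_of_mem_nhds hU) y).ne')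
    (eventually_of_mem hU hsum)
  have hnear : ∀ᶠ Δ in 𝓝 (0 : EuclideanSpace ℝ (Fin P)), θ₀ + Δ ∈ U :=
    (by simpa using (continuous_const_add θ₀).tendsto 0 : Tendsto (θ₀ + ·) _ _).eventually hU
  refine hexpand.neg_left.congr' ?_ EventuallyEq.rfl
  filter_upwards [hnear] with Δ hΔ
  simp only [Real.log_div (hpos θ₀ (mem_of_mem_nhds hU) _).ne' (hpos _ hΔ _).ne', mul_sub,
    Finset.sum_sub_distrib]
  ring

/-- Second-order Taylor approximation of the KL divergence: the KL divergence
between the model at `θ₀` and at `θ₀ + Δ` equals `(1/2) Δᵀ F Δ` (the Fisher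
quadratic form) up to `o(‖Δ‖²)`. -/
theorem kl_second_order_taylor_fisher
    {α : Type*} [Fintype α] [Nonempty α] {P : ℕ}
    (p : EuclideanSpace ℝ (Fin P) → α → ℝ) (θ₀ : EuclideanSpace ℝ (Fin P))
    (U : Set (EuclideanSpace ℝ (Fin P))) (hU : U ∈ nhds θ₀)
    (hpos : ∀ θ ∈ U, ∀ y, 0 < p θ y)
    (hsum : ∀ θ ∈ U, ∑ y, p θ y = 1)
    (hsmooth : ∀ y, ContDiffOn ℝ 2 (fun θ => p θ y) U) :
    (fun Δ : EuclideanSpace ℝ (Fin P) =>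
        (∑ y, p θ₀ y * Real.log (p θ₀ y / p (θ₀ + Δ) y)) -
          (1 / 2) * ∑ y, p θ₀ y *
            ((fderiv ℝ (fun θ => Real.log (p θ y)) θ₀) Δ) ^ 2)
      =o[nhds (0 : EuclideanSpace ℝ (Fin P))]
        (fun Δ : EuclideanSpace ℝ (Fin P) => ‖Δ‖ ^ 2) :=
  kl_second_order_taylor_fisher_general p θ₀ U hU hpos hsum hsmooth
end

section
/- Let α be a finite nonempty type and E = EuclideanSpace ℝ (Fin P). Let p : E → α → ℝ and θ₀ ∈ E be such that on a neighborhood U of θ₀ we have p θ y > 0 for all y and ∑_{y∈α} p θ y = 1, and for each y the map θ ↦ p θ y is twice continuously differentiable on U. Then the information matrix equality holds: for all u, v ∈ E, ∑_{y} p θ₀ y * (D²_y(u, v)) = − ∑_{y} p θ₀ y * (L_y u) * (L_y v), where L_y = fderiv ℝ (fun θ => Real.log (p θ y)) θ₀ is the score and D²_y is the second Fréchet derivative of θ ↦ Real.log (p θ y) at θ₀; i.e., the expected negative Hessian of the log-likelihood equals the Fisher information bilinear form. -/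
/-!
Differentiating `log p` twice gives `p · D² log p = D² p - p · (D log p) ⊗ (D log p)` wherever
`p > 0`. Summing over the labels, the terms `D² p_y` add up to the second derivative of
`∑ y, p_y`, which vanishes because that sum is identically `1` near `θ₀`.
-/

open Filter Topology

section

variable {E F : Type*} [NormedAddCommGroup E] [NormedSpace ℝ E]
  [NormedAddCommGroup F] [NormedSpace ℝ F]

theorem sum_iteratedFDeriv_eq_zero_of_sum_eventuallyEq_const {ι : Type*} {s : Finset ι}
    {f : ι → E → F} {x : E} {c : F} {n : ℕ} (hn : n ≠ 0)
    (hf : ∀ i ∈ s, ContDiffAt ℝ n (f i) x)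
    (hsum : (fun z => ∑ i ∈ s, f i z) =ᶠ[𝓝 x] fun _ => c) :
    ∑ i ∈ s, iteratedFDeriv ℝ n (f i) x = 0 := by
  rw [← iteratedFDeriv_fun_sum_apply hf, (hsum.iteratedFDeriv ℝ n).eq_of_nhds,
    iteratedFDeriv_const_of_ne hn, Pi.zero_apply]

theorem mul_iteratedFDeriv_two_log_apply {f : E → ℝ} {x : E} (hf : ContDiffAt ℝ 2 f x)
    (hx : f x ≠ 0) (u v : E) :
    f x * iteratedFDeriv ℝ 2 (fun z => Real.log (f z)) x ![u, v]
      = iteratedFDeriv ℝ 2 f x ![u, v]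
        - f x * fderiv ℝ (fun z => Real.log (f z)) x u
          * fderiv ℝ (fun z => Real.log (f z)) x v := by
  have hlog :
      fderiv ℝ (fun z => Real.log (f z)) =ᶠ[𝓝 x] fun z => (f z)⁻¹ • fderiv ℝ f z := by
    filter_upwards [hf.eventually (by simp), hf.continuousAt.eventually_ne hx] with z hfz hz
    exact fderiv.log (hfz.differentiableAt (by simp)) hz
  have hinvSmul := ((hasDerivAt_inv hx).comp_hasFDerivAt x
    (hf.differentiableAt (by simp)).hasFDerivAt).smul
    ((hf.fderiv_right (m := 1) (by norm_num)).differentiableAt (by simp)).hasFDerivAt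
  rw [iteratedFDeriv_two_apply, iteratedFDeriv_two_apply,
    (hinvSmul.congr_of_eventuallyEq hlog).fderiv, hlog.eq_of_nhds]
  simp only [Function.comp_apply, neg_smul, add_apply, smul_apply, neg_apply, smul_eq_mul,
    ContinuousLinearMap.smulRight_apply, Matrix.cons_val_zero, Matrix.cons_val_one,
    Matrix.cons_val_fin_one]
  field_simp
  ring

end

theorem information_matrix_equality_general
    {α : Type*} [Fintype α] {P : ℕ}
    (p : EuclideanSpace ℝ (Fin P) → α → ℝ) (θ₀ : EuclideanSpace ℝ (Fin P))
    (U : Set (EuclideanSpace ℝ (Fin P))) (hU : U ∈ nhds θ₀)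
    (hpos : ∀ θ ∈ U, ∀ y, 0 < p θ y)
    (hsum : ∀ θ ∈ U, ∑ y, p θ y = 1)
    (hsmooth : ∀ y, ContDiffOn ℝ 2 (fun θ => p θ y) U) :
    ∀ u v : EuclideanSpace ℝ (Fin P),
      ∑ y, p θ₀ y * (iteratedFDeriv ℝ 2 (fun θ => Real.log (p θ y)) θ₀ ![u, v])
        = -∑ y, p θ₀ y * ((fderiv ℝ (fun θ => Real.log (p θ y)) θ₀) u)
            * ((fderiv ℝ (fun θ => Real.log (p θ y)) θ₀) v) := by
  intro u v
  have hp : ∀ y, ContDiffAt ℝ 2 (fun θ => p θ y) θ₀ := fun y => (hsmooth y).contDiffAt hU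
  have hp₀ : ∀ y, p θ₀ y ≠ 0 := fun y => (hpos θ₀ (mem_of_mem_nhds hU) y).ne'
  have hD2sum : ∑ y, iteratedFDeriv ℝ 2 (fun θ => p θ y) θ₀ = 0 :=
    sum_iteratedFDeriv_eq_zero_of_sum_eventuallyEq_const two_ne_zero (fun y _ => hp y)
      (eventually_of_mem hU hsum)
  calc ∑ y, p θ₀ y * iteratedFDeriv ℝ 2 (fun θ => Real.log (p θ y)) θ₀ ![u, v]
      = ∑ y, (iteratedFDeriv ℝ 2 (fun θ => p θ y) θ₀ ![u, v]
          - p θ₀ y * fderiv ℝ (fun θ => Real.log (p θ y)) θ₀ u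
            * fderiv ℝ (fun θ => Real.log (p θ y)) θ₀ v) :=
        Finset.sum_congr rfl fun y _ => mul_iteratedFDeriv_two_log_apply (hp y) (hp₀ y) u v
    _ = (∑ y, iteratedFDeriv ℝ 2 (fun θ => p θ y) θ₀) ![u, v]
          - ∑ y, p θ₀ y * fderiv ℝ (fun θ => Real.log (p θ y)) θ₀ u
            * fderiv ℝ (fun θ => Real.log (p θ y)) θ₀ v := by
        rw [Finset.sum_sub_distrib, sum_apply]
    _ = _ := by rw [hD2sum, zero_apply, zero_sub]

/-- Information matrix equality: the expected Hessian of the log-likelihood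
equals the negative of the Fisher information bilinear form. -/
theorem information_matrix_equality
    {α : Type*} [Fintype α] [Nonempty α] {P : ℕ}
    (p : EuclideanSpace ℝ (Fin P) → α → ℝ) (θ₀ : EuclideanSpace ℝ (Fin P))
    (U : Set (EuclideanSpace ℝ (Fin P))) (hU : U ∈ nhds θ₀)
    (hpos : ∀ θ ∈ U, ∀ y, 0 < p θ y)
    (hsum : ∀ θ ∈ U, ∑ y, p θ y = 1)
    (hsmooth : ∀ y, ContDiffOn ℝ 2 (fun θ => p θ y) U) :
    ∀ u v : EuclideanSpace ℝ (Fin P),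
      ∑ y, p θ₀ y * (iteratedFDeriv ℝ 2 (fun θ => Real.log (p θ y)) θ₀ ![u, v])
        = -∑ y, p θ₀ y * ((fderiv ℝ (fun θ => Real.log (p θ y)) θ₀) u)
            * ((fderiv ℝ (fun θ => Real.log (p θ y)) θ₀) v) :=
  information_matrix_equality_general p θ₀ U hU hpos hsum hsmooth
end

section
/- Let α be a finite nonempty type and E = EuclideanSpace ℝ (Fin P). Let p : E → α → ℝ and θ₀ ∈ E be such that on a neighborhood U of θ₀ we have p θ y > 0 for all y and ∑_{y∈α} p θ y = 1, and for each y the map θ ↦ p θ y is differentiable at θ₀. Define φ(θ') = ∑_{y} p θ₀ y * Real.log (p θ₀ y / p θ' y), the KL divergence from p θ₀ to p θ'. Then φ is differentiable at θ₀ and fderiv ℝ φ θ₀ = 0; i.e., the first-order term in the Taylor expansion of the KL divergence vanishes. -/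
open scoped Topology

/-!
Since `∑ y, p θ y = 1` near `θ₀`, the derivatives `Dᵧ` of the coordinates `θ ↦ p θ y` at `θ₀` sum
to zero. Writing `p θ₀ y * log (p θ₀ y / p θ y) = p θ₀ y * log (p θ₀ y) - p θ₀ y * log (p θ y)`,
the `y`-th term of the divergence has derivative `-(p θ₀ y / p θ₀ y) • Dᵧ = -Dᵧ` at `θ₀`, so the
derivative of the sum is `-∑ y, Dᵧ = 0`.
-/

section

variable {E : Type*} [NormedAddCommGroup E] [NormedSpace ℝ E]

theorem sum_fderiv_eq_zero_of_sum_eventuallyEq_const {ι : Type*} [Fintype ι]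
    {p : E → ι → ℝ} {p' : ι → E →L[ℝ] ℝ} {x : E} {c : ℝ}
    (hp : ∀ i, HasFDerivAt (fun θ => p θ i) (p' i) x)
    (hsum : ∀ᶠ θ in 𝓝 x, ∑ i, p θ i = c) :
    ∑ i, p' i = 0 :=
  (HasFDerivAt.fun_sum fun i _ => hp i).unique <|
    (hasFDerivAt_const c x).congr_of_eventuallyEq hsum

theorem Real.mul_log_div_eq_sub {a b : ℝ} (hb : b ≠ 0) :
    a * Real.log (a / b) = a * Real.log a - a * Real.log b := by
  rcases eq_or_ne a 0 with rfl | ha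
  · simp
  · rw [Real.log_div ha hb, mul_sub]

theorem HasFDerivAt.const_mul_log_const_div {f : E → ℝ} {f' : E →L[ℝ] ℝ} {x : E} (c : ℝ)
    (hf : HasFDerivAt f f' x) (hx : f x ≠ 0) :
    HasFDerivAt (fun θ => c * Real.log (c / f θ)) (-((c / f x) • f')) x := by
  have hlog : HasFDerivAt (fun θ => c * Real.log c - c * Real.log (f θ))
      (-((c / f x) • f')) x :=
    ((hasFDerivAt_const (c * Real.log c) x).sub ((hf.log hx).const_mul c)).congr_fderiv <| by
      rw [smul_smul, zero_sub, div_eq_mul_inv]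
  refine hlog.congr_of_eventuallyEq ?_
  filter_upwards [hf.continuousAt.eventually_ne hx] with θ hθ
  exact Real.mul_log_div_eq_sub hθ

theorem hasFDerivAt_sum_mul_log_div_self {ι : Type*} [Fintype ι] {p : E → ι → ℝ} {x : E}
    (hp : ∀ i, DifferentiableAt ℝ (fun θ => p θ i) x) (hx : ∀ i, p x i ≠ 0)
    (hsum : ∀ᶠ θ in 𝓝 x, ∑ i, p θ i = 1) :
    HasFDerivAt (fun θ => ∑ i, p x i * Real.log (p x i / p θ i)) (0 : E →L[ℝ] ℝ) x := by
  have hterm : ∀ i, HasFDerivAt (fun θ => p x i * Real.log (p x i / p θ i))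
      (-fderiv ℝ (fun θ => p θ i) x : E →L[ℝ] ℝ) x := fun i => by
    simpa only [div_self (hx i), one_smul] using
      (hp i).hasFDerivAt.const_mul_log_const_div (p x i) (hx i)
  have hzero := sum_fderiv_eq_zero_of_sum_eventuallyEq_const (fun i => (hp i).hasFDerivAt) hsum
  simpa [Finset.sum_neg_distrib, hzero] using
    HasFDerivAt.fun_sum (u := Finset.univ) fun i _ => hterm i

end

theorem kl_fderiv_eq_zero_general
    {α : Type*} [Fintype α] {P : ℕ}
    (p : EuclideanSpace ℝ (Fin P) → α → ℝ) (θ₀ : EuclideanSpace ℝ (Fin P))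
    (U : Set (EuclideanSpace ℝ (Fin P))) (hU : U ∈ nhds θ₀)
    (hpos : ∀ θ ∈ U, ∀ y, 0 < p θ y)
    (hsum : ∀ θ ∈ U, ∑ y, p θ y = 1)
    (hdiff : ∀ y, DifferentiableAt ℝ (fun θ => p θ y) θ₀) :
    DifferentiableAt ℝ
        (fun θ' => ∑ y, p θ₀ y * Real.log (p θ₀ y / p θ' y)) θ₀ ∧
      fderiv ℝ (fun θ' => ∑ y, p θ₀ y * Real.log (p θ₀ y / p θ' y)) θ₀ = 0 := by
  have hφ := hasFDerivAt_sum_mul_log_div_self hdiff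
    (fun y => (hpos θ₀ (mem_of_mem_nhds hU) y).ne') (Filter.eventually_of_mem hU hsum)
  exact ⟨hφ.differentiableAt, hφ.fderiv⟩

/-- The first-order term of the Taylor expansion of the KL divergence
`φ θ' = D_KL(p θ₀ ‖ p θ')` vanishes at `θ₀`: `φ` is differentiable at `θ₀`
with zero derivative there. -/
theorem kl_fderiv_eq_zero
    {α : Type*} [Fintype α] [Nonempty α] {P : ℕ}
    (p : EuclideanSpace ℝ (Fin P) → α → ℝ) (θ₀ : EuclideanSpace ℝ (Fin P))
    (U : Set (EuclideanSpace ℝ (Fin P))) (hU : U ∈ nhds θ₀)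
    (hpos : ∀ θ ∈ U, ∀ y, 0 < p θ y)
    (hsum : ∀ θ ∈ U, ∑ y, p θ y = 1)
    (hdiff : ∀ y, DifferentiableAt ℝ (fun θ => p θ y) θ₀) :
    DifferentiableAt ℝ
        (fun θ' => ∑ y, p θ₀ y * Real.log (p θ₀ y / p θ' y)) θ₀ ∧
      fderiv ℝ (fun θ' => ∑ y, p θ₀ y * Real.log (p θ₀ y / p θ' y)) θ₀ = 0 :=
  kl_fderiv_eq_zero_general p θ₀ U hU hpos hsum hdiff
end
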